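/- Let n ≥ 1, let U ⊆ ℝⁿ be open, let f : U → ℝ be a positive C³ function and let u : U → ℝ be a C¹ function. Then at every point of U, div((u²/f)·(Hess f)·∇f) = (u²/f)·⟨∇(Δf), ∇f⟩ + (2u/f)·(∇u)ᵀ·(Hess f)·(∇f) − (u²/f²)·(∇f)ᵀ·(Hess f)·(∇f) + (u²/f)·‖Hess f‖_F². -/

import Mathlib

open scoped BigOperators

/-- Partial derivative `∂ᵢ v` of a scalar function on `ℝⁿ = Fin n → ℝ`. -/
noncomputable def pd {n : ℕ} (i : Fin n) (v : (Fin n → ℝ) → ℝ) (x : Fin n → ℝ) : ℝ :=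
  fderiv ℝ v x (Pi.single i 1)

/-- Gradient `∇v`. -/
noncomputable def grad {n : ℕ} (v : (Fin n → ℝ) → ℝ) (x : Fin n → ℝ) : Fin n → ℝ :=
  fun i => pd i v x

/-- Hessian matrix `(∂ᵢ∂ⱼ v)ᵢⱼ`. -/
noncomputable def hess {n : ℕ} (v : (Fin n → ℝ) → ℝ) (x : Fin n → ℝ) :
    Matrix (Fin n) (Fin n) ℝ :=
  fun i j => pd i (fun y => pd j v y) x

/-- Laplacian `Δv = tr (Hess v)`. -/
noncomputable def lap {n : ℕ} (v : (Fin n → ℝ) → ℝ) (x : Fin n → ℝ) : ℝ :=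
  ∑ i, hess v x i i

/-- Divergence of a vector field. -/
noncomputable def divg {n : ℕ} (X : (Fin n → ℝ) → (Fin n → ℝ)) (x : Fin n → ℝ) : ℝ :=
  ∑ i, pd i (fun y => X y i) x

/-- Euclidean inner product. -/
def dotp {n : ℕ} (a b : Fin n → ℝ) : ℝ := ∑ i, a i * b i

/-- Frobenius inner product of matrices. -/
def frobInner {n : ℕ} (A B : Matrix (Fin n) (Fin n) ℝ) : ℝ := ∑ i, ∑ j, A i j * B i j

/-- Squared Frobenius norm of a matrix. -/
def frobSq {n : ℕ} (A : Matrix (Fin n) (Fin n) ℝ) : ℝ := ∑ i, ∑ j, (A i j) ^ 2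

/-! Writing `X = φ • V` with `φ = u²/f` and `V = (Hess f) ∇f`, the product rule gives
`div X = ⟨∇φ, V⟩ + φ div V`, and `∇φ = (2u/f) ∇u - (u²/f²) ∇f`. Componentwise,
`div V = ∑ᵢⱼ ∂ᵢ∂ᵢ∂ⱼf ∂ⱼf + ∑ᵢⱼ (∂ᵢ∂ⱼf)²`, and symmetry of second derivatives of `f` and of `∂ᵢf`
turns `∑ᵢ ∂ᵢ∂ᵢ∂ⱼf` into `∂ⱼΔf`. -/

open Finset

section
variable {n : ℕ} {x : Fin n → ℝ}

lemma dotp_eq_dotProduct (a b : Fin n → ℝ) : dotp a b = a ⬝ᵥ b := rfl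

lemma Filter.EventuallyEq.pd_eq {v w : (Fin n → ℝ) → ℝ} (h : v =ᶠ[nhds x] w) (i : Fin n) :
    pd i v x = pd i w x := by
  rw [pd, pd, h.fderiv_eq]

lemma ContDiffAt.pd {m k : WithTop ℕ∞} {v : (Fin n → ℝ) → ℝ} (hv : ContDiffAt ℝ k v x)
    (hmk : m + 1 ≤ k) (j : Fin n) : ContDiffAt ℝ m (pd j v) x :=
  (hv.fderiv_right hmk).clm_apply contDiffAt_const

lemma pd_mul {a b : (Fin n → ℝ) → ℝ} (ha : DifferentiableAt ℝ a x)
    (hb : DifferentiableAt ℝ b x) (i : Fin n) :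
    pd i (fun y => a y * b y) x = pd i a x * b x + a x * pd i b x := by
  simp only [pd, fderiv_fun_mul ha hb, add_apply, smul_apply, smul_eq_mul]
  ring

lemma pd_sum {ι : Type*} (s : Finset ι) {F : ι → (Fin n → ℝ) → ℝ}
    (hF : ∀ j ∈ s, DifferentiableAt ℝ (F j) x) (i : Fin n) :
    pd i (fun y => ∑ j ∈ s, F j y) x = ∑ j ∈ s, pd i (F j) x := by
  simp only [pd, fderiv_fun_sum hF, FunLike.coe_sum, Finset.sum_apply]

lemma grad_pow {a : (Fin n → ℝ) → ℝ} (ha : DifferentiableAt ℝ a x) (k : ℕ) :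
    grad (fun y => a y ^ k) x = (k * a x ^ (k - 1)) • grad a x := by
  ext i
  simp [grad, pd, fderiv_fun_pow k ha]

lemma pd_inv {b : (Fin n → ℝ) → ℝ} (hb : DifferentiableAt ℝ b x) (hb0 : b x ≠ 0) (i : Fin n) :
    pd i (fun y => (b y)⁻¹) x = -pd i b x / b x ^ 2 := by
  have hinv : HasFDerivAt (fun y => (b y)⁻¹) (-(b x ^ 2)⁻¹ • fderiv ℝ b x) x :=
    (hasDerivAt_inv hb0).comp_hasFDerivAt x hb.hasFDerivAt
  rw [pd, hinv.fderiv, pd, smul_apply, smul_eq_mul, neg_mul, neg_div, div_eq_inv_mul]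

lemma grad_div {a b : (Fin n → ℝ) → ℝ} (ha : DifferentiableAt ℝ a x)
    (hb : DifferentiableAt ℝ b x) (hb0 : b x ≠ 0) :
    grad (fun y => a y / b y) x = (b x)⁻¹ • grad a x - (a x / b x ^ 2) • grad b x := by
  ext i
  simp only [grad, div_eq_mul_inv, pd_mul ha (hb.fun_inv hb0), pd_inv hb hb0, Pi.sub_apply,
    Pi.smul_apply, smul_eq_mul]
  ring

lemma divg_smul {φ : (Fin n → ℝ) → ℝ} {X : (Fin n → ℝ) → Fin n → ℝ}
    (hφ : DifferentiableAt ℝ φ x) (hX : ∀ i, DifferentiableAt ℝ (fun y => X y i) x) :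
    divg (fun y => φ y • X y) x = dotp (grad φ x) (X x) + φ x * divg X x := by
  simp only [divg, dotp, grad, mul_sum, ← sum_add_distrib, Pi.smul_apply, smul_eq_mul]
  exact sum_congr rfl fun i _ => pd_mul hφ (hX i) i

lemma hess_comm {f : (Fin n → ℝ) → ℝ} (hf : ContDiffAt ℝ 2 f x) (i j : Fin n) :
    hess f x i j = hess f x j i := by
  have hd : DifferentiableAt ℝ (fderiv ℝ f) x :=
    (hf.fderiv_right (m := 1) le_rfl).differentiableAt one_ne_zero
  have hpd : ∀ a b : Fin n,
      hess f x a b = fderiv ℝ (fderiv ℝ f) x (Pi.single a 1) (Pi.single b 1) := by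
    intro a b
    simp [hess, pd, fderiv_clm_apply hd (differentiableAt_const _)]
  rw [hpd, hpd, hf.isSymmSndFDerivAt (by simp)]

lemma differentiableAt_grad_apply {f : (Fin n → ℝ) → ℝ} (hf : ContDiffAt ℝ 2 f x) (j : Fin n) :
    DifferentiableAt ℝ (fun y => grad f y j) x :=
  (hf.pd (m := 1) (by norm_num) j).differentiableAt one_ne_zero

lemma differentiableAt_hess_apply {f : (Fin n → ℝ) → ℝ} (hf : ContDiffAt ℝ 3 f x) (i j : Fin n) :
    DifferentiableAt ℝ (fun y => hess f y i j) x :=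
  differentiableAt_grad_apply (hf.pd (m := 2) (by norm_num) j) i

lemma sum_pd_hess_eq_grad_lap {f : (Fin n → ℝ) → ℝ} (hf : ContDiffAt ℝ 3 f x) (j : Fin n) :
    ∑ i, pd i (fun y => hess f y i j) x = grad (lap f) x j := by
  have hsymm : ∀ i, (fun y => hess f y i j) =ᶠ[nhds x] fun y => hess f y j i := fun i => by
    filter_upwards [hf.eventually (by simp)] with y hy
    exact hess_comm (hy.of_le (by norm_num)) i j
  calc ∑ i, pd i (fun y => hess f y i j) x = ∑ i, hess (pd i f) x i j :=
        sum_congr rfl fun i _ => (hsymm i).pd_eq i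
    _ = ∑ i, hess (pd i f) x j i :=
        sum_congr rfl fun i _ => hess_comm (hf.pd (m := 2) (by norm_num) i) i j
    _ = grad (lap f) x j :=
        (pd_sum _ (fun i _ => differentiableAt_hess_apply hf i i) j).symm

lemma differentiableAt_hess_mulVec_grad_apply {f : (Fin n → ℝ) → ℝ} (hf : ContDiffAt ℝ 3 f x)
    (i : Fin n) : DifferentiableAt ℝ (fun y => (hess f y).mulVec (grad f y) i) x :=
  show DifferentiableAt ℝ (fun y => ∑ j, hess f y i j * grad f y j) x from
    .fun_sum fun j _ => (differentiableAt_hess_apply hf i j).fun_mul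
      (differentiableAt_grad_apply (hf.of_le (by norm_num)) j)

lemma divg_hess_mulVec_grad {f : (Fin n → ℝ) → ℝ} (hf : ContDiffAt ℝ 3 f x) :
    divg (fun y => (hess f y).mulVec (grad f y)) x =
      dotp (grad (lap f) x) (grad f x) + frobSq (hess f x) := by
  have hH := differentiableAt_hess_apply hf
  have hG := differentiableAt_grad_apply (hf.of_le (by norm_num))
  have hpd : ∀ i, pd i (fun y => (hess f y).mulVec (grad f y) i) x =
      ∑ j, (pd i (fun y => hess f y i j) x * grad f x j + hess f x i j * hess f x i j) := by
    intro i
    simp only [Matrix.mulVec, dotProduct]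
    rw [pd_sum _ (fun j _ => (hH i j).fun_mul (hG j))]
    exact sum_congr rfl fun j _ => pd_mul (hH i j) (hG j) i
  simp only [divg, hpd, sum_add_distrib, dotp, frobSq, ← sum_pd_hess_eq_grad_lap hf, sum_mul, sq]
  rw [sum_comm]

end

theorem stmt9_general {n : ℕ} {U : Set (Fin n → ℝ)} (hU : IsOpen U)
    (f u : (Fin n → ℝ) → ℝ)
    (hf : ContDiffOn ℝ 3 f U) (hfpos : ∀ x ∈ U, 0 < f x)
    (hu : ContDiffOn ℝ 1 u U) :
    ∀ x ∈ U,
      divg (fun y => ((u y) ^ 2 / f y) • ((hess f y).mulVec (grad f y))) x =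
        (u x ^ 2 / f x) * dotp (grad (fun y => lap f y) x) (grad f x)
        + (2 * u x / f x) * dotp (grad u x) ((hess f x).mulVec (grad f x))
        - (u x ^ 2 / (f x) ^ 2) * dotp (grad f x) ((hess f x).mulVec (grad f x))
        + (u x ^ 2 / f x) * frobSq (hess f x) := by
  intro x hx
  have hfx : ContDiffAt ℝ 3 f x := hf.contDiffAt (hU.mem_nhds hx)
  have hfd : DifferentiableAt ℝ f x := hfx.differentiableAt (by norm_num)
  have hud : DifferentiableAt ℝ u x :=
    (hu.contDiffAt (hU.mem_nhds hx)).differentiableAt one_ne_zero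
  have hf0 : f x ≠ 0 := (hfpos x hx).ne'
  have hφ : DifferentiableAt ℝ (fun y => u y ^ 2 / f y) x := by fun_prop (disch := exact hf0)
  rw [divg_smul hφ (differentiableAt_hess_mulVec_grad_apply hfx), divg_hess_mulVec_grad hfx,
    grad_div (hud.fun_pow 2) hfd hf0, grad_pow hud]
  simp only [dotp_eq_dotProduct, sub_dotProduct, smul_dotProduct, smul_eq_mul]
  ring

theorem stmt9 {n : ℕ} (hn : 1 ≤ n) {U : Set (Fin n → ℝ)} (hU : IsOpen U)
    (f u : (Fin n → ℝ) → ℝ)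
    (hf : ContDiffOn ℝ 3 f U) (hfpos : ∀ x ∈ U, 0 < f x)
    (hu : ContDiffOn ℝ 1 u U) :
    ∀ x ∈ U,
      divg (fun y => ((u y) ^ 2 / f y) • ((hess f y).mulVec (grad f y))) x =
        (u x ^ 2 / f x) * dotp (grad (fun y => lap f y) x) (grad f x)
        + (2 * u x / f x) * dotp (grad u x) ((hess f x).mulVec (grad f x))
        - (u x ^ 2 / (f x) ^ 2) * dotp (grad f x) ((hess f x).mulVec (grad f x))
        + (u x ^ 2 / f x) * frobSq (hess f x) :=
  stmt9_general hU f u hf hfpos hu
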